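/- arXiv:1304.4778 — 2 statements merged into one kernel-verified Lean document; each statement's English description precedes it below -/
import Mathlib

section
/- For z ∈ [0,1] and 0 ≤ a ≤ b ≤ 1 write p_n(z,a,b) := Pr(Z_n ∈ [a,b] | Z₀ = z) for the BEC Bhattacharyya process started at z. Let a, b ∈ (0,1) satisfy √a ≤ 1 − √(1−b), and define sequences u₀ = a, u_{k+1} = 1 − √(1 − u_k), and v₀ = b, v_{k+1} = √(v_k). Then for all integers m, n ≥ 0 and all z ∈ [0,1]: 2^m · p_{n+m}(z, a, b) ≥ p_n(z, u_m, v_m). -/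
open MeasureTheory

/-- The BEC polar maps: `t₁(x) = x²`, `t₀(x) = 2x - x²`. -/
noncomputable def becT (b : Bool) (x : ℝ) : ℝ := if b then x ^ 2 else 2 * x - x ^ 2

/-- The BEC Bhattacharyya process started at `z`. -/
noncomputable def becZ (z : ℝ) : ℕ → (ℕ → Bool) → ℝ
  | 0, _ => z
  | n + 1, ω => becT (ω n) (becZ z n ω)

/-- `μ` is the i.i.d. Bernoulli(1/2) product measure on `{0,1}^ℕ`,
characterized by its values on cylinder sets. -/
def IsBernoulliHalf (μ : Measure (ℕ → Bool)) : Prop :=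
  ∀ (n : ℕ) (b : Fin n → Bool), μ {ω | ∀ i : Fin n, ω i = b i} = (2 : ENNReal)⁻¹ ^ n


open Finset Real Set

/-!
The condition `√u ≤ 1 - √(1 - v)` says that the preimages `t₁⁻¹[u, v] = [√u, √v]` and
`t₀⁻¹[u, v] = [1 - √(1 - u), 1 - √(1 - v)]` overlap, so their union is
`[u', v'] = [1 - √(1 - u), √v]`: from every point of `[u', v']` one of the two branches lands in
`[u, v]`. Appending such a bit to each length-`n` path with `Z_n ∈ [u', v']` injects these paths
into the length-`(n + 1)` paths with `Z_{n+1} ∈ [u, v]`, which costs a factor `2` in probability.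
The condition passes from `(u, v)` to `(u', v')`, because `φ(c) + φ(1 - c) ≤ 1` for
`φ(c) = √(1 - √(1 - c²))`, so the step can be iterated `m` times.
-/

lemma sqrt_one_sub_sqrt_one_sub_sq_add_le_one {c : ℝ} (hc : c ∈ Icc (0 : ℝ) 1) :
    √(1 - √(1 - c ^ 2)) + √(1 - √(1 - (1 - c) ^ 2)) ≤ 1 := by
  obtain ⟨h0, h1⟩ := hc
  set P := √(1 - c ^ 2)
  set Q := √(1 - (1 - c) ^ 2)
  have hP : P ^ 2 = 1 - c ^ 2 := sq_sqrt (by nlinarith)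
  have hQ : Q ^ 2 = 1 - (1 - c) ^ 2 := sq_sqrt (by nlinarith)
  have hP0 : 0 ≤ P := sqrt_nonneg _
  have hQ0 : 0 ≤ Q := sqrt_nonneg _
  have hPc : 1 - c ≤ P := by nlinarith
  have hQc : c ≤ Q := by nlinarith
  have hsqQ := sq_sqrt (show 0 ≤ 1 - Q by nlinarith)
  have hsqQ0 := sqrt_nonneg (1 - Q)
  have h2B : 2 * √(1 - Q) ≤ 1 + P - Q := by
    nlinarith [mul_nonneg hP0 hQ0]
  suffices √(1 - P) ≤ 1 - √(1 - Q) by linarith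
  rw [sqrt_le_left (by nlinarith)]
  nlinarith

def BecWindow (u v : ℝ) : Prop :=
  u ∈ Icc (0 : ℝ) 1 ∧ v ∈ Icc (0 : ℝ) 1 ∧ √u ≤ 1 - √(1 - v)

lemma one_sub_sqrt_one_sub_mem_Icc {u : ℝ} (hu : u ∈ Icc (0 : ℝ) 1) :
    1 - √(1 - u) ∈ Icc (0 : ℝ) 1 :=
  ⟨sub_nonneg.2 (sqrt_le_one.2 (by linarith [hu.1])), sub_le_self _ (sqrt_nonneg _)⟩

lemma sqrt_mem_Icc {v : ℝ} (hv : v ∈ Icc (0 : ℝ) 1) : √v ∈ Icc (0 : ℝ) 1 :=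
  ⟨sqrt_nonneg _, sqrt_le_one.2 hv.2⟩

lemma BecWindow.preimage {u v : ℝ} (h : BecWindow u v) : BecWindow (1 - √(1 - u)) √v := by
  obtain ⟨hu, hv, hsq⟩ := h
  refine ⟨one_sub_sqrt_one_sub_mem_Icc hu, sqrt_mem_Icc hv, ?_⟩
  set s := √u
  set c := 1 - √(1 - v)
  have hc : c ∈ Icc (0 : ℝ) 1 := one_sub_sqrt_one_sub_mem_Icc hv
  have hu' : u = s ^ 2 := (sq_sqrt hu.1).symm
  have hv' : v = 1 - (1 - c) ^ 2 := by
    rw [sub_sub_cancel, sq_sqrt (by linarith [hv.2])]; ring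
  have hmono : √(1 - √(1 - s ^ 2)) ≤ √(1 - √(1 - c ^ 2)) :=
    sqrt_le_sqrt (sub_le_sub_left (sqrt_le_sqrt (by nlinarith [sqrt_nonneg u])) _)
  rw [hu', hv']
  linarith [sqrt_one_sub_sqrt_one_sub_sq_add_le_one hc]

lemma exists_becT_mem_Icc {u v x : ℝ} (hu : u ≤ 1) (hv : v ≤ 1) (hsq : √u ≤ 1 - √(1 - v))
    (hx : x ∈ Icc (1 - √(1 - u)) √v) : ∃ b, becT b x ∈ Icc u v := by
  obtain ⟨hxu, hxv⟩ := hx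
  have hx1 : x ≤ 1 := hxv.trans (sqrt_le_one.2 hv)
  rcases le_or_gt x (1 - √(1 - v)) with hle | hgt
  · refine ⟨false, ?_⟩
    have hu' := sq_sqrt (show 0 ≤ 1 - u by linarith)
    have hv' := sq_sqrt (show 0 ≤ 1 - v by linarith)
    simp only [becT, Bool.false_eq_true, if_false, Set.mem_Icc]
    constructor <;> nlinarith [sqrt_nonneg (1 - u), sqrt_nonneg (1 - v)]
  · refine ⟨true, ?_⟩
    have hsu : √u ≤ x := hsq.trans hgt.le
    have hx0 : 0 < x := (sqrt_nonneg u).trans_lt (hsq.trans_lt hgt)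
    simp only [becT, if_true, Set.mem_Icc]
    exact ⟨(sqrt_le_left hx0.le).1 hsu, (le_sqrt' hx0).1 hxv⟩

noncomputable def becZFin (z : ℝ) : (n : ℕ) → (Fin n → Bool) → ℝ
  | 0, _ => z
  | n + 1, c => becT (c (Fin.last n)) (becZFin z n (Fin.init c))

lemma becZFin_snoc (z : ℝ) {n : ℕ} (c : Fin n → Bool) (b : Bool) :
    becZFin z (n + 1) (Fin.snoc c b) = becT b (becZFin z n c) := by
  simp [becZFin]

lemma becZ_eq_becZFin (z : ℝ) (n : ℕ) (ω : ℕ → Bool) :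
    becZ z n ω = becZFin z n (fun i => ω i) := by
  induction n with
  | zero => rfl
  | succ n ih => simp only [becZ, becZFin, ih]; rfl

lemma IsBernoulliHalf.measure_restrict_mem {μ : Measure (ℕ → Bool)} (hμ : IsBernoulliHalf μ)
    {n : ℕ} (E : Finset (Fin n → Bool)) :
    μ {ω | (fun i : Fin n => ω i) ∈ E} = #E * (2 : ENNReal)⁻¹ ^ n := by
  have hfiber (c : Fin n → Bool) :
      (fun ω : ℕ → Bool => fun i : Fin n => ω i) ⁻¹' {c} = {ω | ∀ i : Fin n, ω i = c i} := by
    ext ω; simp [funext_iff]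
  have hmeas : Measurable fun ω : ℕ → Bool => fun i : Fin n => ω i :=
    measurable_pi_lambda _ fun i => measurable_pi_apply _
  calc μ {ω | (fun i : Fin n => ω i) ∈ E}
      = ∑ c ∈ E, μ ((fun ω : ℕ → Bool => fun i : Fin n => ω i) ⁻¹' {c}) :=
        (sum_measure_preimage_singleton E fun c _ => hmeas (measurableSet_singleton c)).symm
    _ = #E * (2 : ENNReal)⁻¹ ^ n := by simp only [hfiber, hμ n, sum_const, nsmul_eq_mul]

lemma IsBernoulliHalf.measure_becZ_mem {μ : Measure (ℕ → Bool)} (hμ : IsBernoulliHalf μ)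
    (z : ℝ) (n : ℕ) (S : Set ℝ) [DecidablePred (· ∈ S)] :
    μ {ω | becZ z n ω ∈ S} = #{c : Fin n → Bool | becZFin z n c ∈ S} * (2 : ENNReal)⁻¹ ^ n := by
  simpa only [becZ_eq_becZFin, Finset.mem_filter, Finset.mem_univ, true_and] using
    hμ.measure_restrict_mem {c : Fin n → Bool | becZFin z n c ∈ S}

lemma card_becZFin_mem_Icc_le (z : ℝ) (n : ℕ) {u v : ℝ} (hu : u ≤ 1) (hv : v ≤ 1)
    (hsq : √u ≤ 1 - √(1 - v)) :
    #{c : Fin n → Bool | becZFin z n c ∈ Icc (1 - √(1 - u)) √v} ≤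
      #{c : Fin (n + 1) → Bool | becZFin z (n + 1) c ∈ Icc u v} :=
  card_le_card_of_surjOn Fin.init fun c hc => by
    obtain ⟨b, hb⟩ := exists_becT_mem_Icc hu hv hsq (mem_filter.1 hc).2
    exact ⟨Fin.snoc c b, by simpa [becZFin_snoc] using hb, Fin.init_snoc _ _⟩

lemma IsBernoulliHalf.measure_becZ_mem_Icc_le {μ : Measure (ℕ → Bool)} (hμ : IsBernoulliHalf μ)
    (z : ℝ) (n : ℕ) {u v : ℝ} (hu : u ≤ 1) (hv : v ≤ 1) (hsq : √u ≤ 1 - √(1 - v)) :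
    μ {ω | becZ z n ω ∈ Icc (1 - √(1 - u)) √v} ≤ 2 * μ {ω | becZ z (n + 1) ω ∈ Icc u v} := by
  rw [hμ.measure_becZ_mem, hμ.measure_becZ_mem]
  calc _ ≤ (#{c : Fin (n + 1) → Bool | becZFin z (n + 1) c ∈ Icc u v} : ENNReal) * 2⁻¹ ^ n := by
        gcongr; exact card_becZFin_mem_Icc_le z n hu hv hsq
    _ = #{c : Fin (n + 1) → Bool | becZFin z (n + 1) c ∈ Icc u v} * 2⁻¹ ^ n * (2 * 2⁻¹) := by
        rw [ENNReal.mul_inv_cancel two_ne_zero ENNReal.ofNat_ne_top, mul_one]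
    _ = 2 * (#{c : Fin (n + 1) → Bool | becZFin z (n + 1) c ∈ Icc u v} * 2⁻¹ ^ (n + 1)) := by
        ring

lemma becWindow_of_rec {u v : ℕ → ℝ} (h0 : BecWindow (u 0) (v 0))
    (hurec : ∀ k, u (k + 1) = 1 - √(1 - u k)) (hvrec : ∀ k, v (k + 1) = √(v k)) (k : ℕ) :
    BecWindow (u k) (v k) := by
  induction k with
  | zero => exact h0
  | succ k ih => rw [hurec, hvrec]; exact ih.preimage

lemma IsBernoulliHalf.measure_becZ_mem_Icc_le_two_pow_mul {μ : Measure (ℕ → Bool)}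
    (hμ : IsBernoulliHalf μ) {u v : ℕ → ℝ} (h0 : BecWindow (u 0) (v 0))
    (hurec : ∀ k, u (k + 1) = 1 - √(1 - u k)) (hvrec : ∀ k, v (k + 1) = √(v k)) (z : ℝ)
    (m n : ℕ) :
    μ {ω | becZ z n ω ∈ Icc (u m) (v m)} ≤
      2 ^ m * μ {ω | becZ z (n + m) ω ∈ Icc (u 0) (v 0)} := by
  induction m generalizing n with
  | zero => simp
  | succ m ih =>
    obtain ⟨hu, hv, hsq⟩ := becWindow_of_rec h0 hurec hvrec m
    calc μ {ω | becZ z n ω ∈ Icc (u (m + 1)) (v (m + 1))}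
        ≤ 2 * μ {ω | becZ z (n + 1) ω ∈ Icc (u m) (v m)} := by
          rw [hurec, hvrec]; exact hμ.measure_becZ_mem_Icc_le z n hu.2 hv.2 hsq
      _ ≤ 2 * (2 ^ m * μ {ω | becZ z (n + 1 + m) ω ∈ Icc (u 0) (v 0)}) := by
          gcongr; exact ih (n + 1)
      _ = 2 ^ (m + 1) * μ {ω | becZ z (n + (m + 1)) ω ∈ Icc (u 0) (v 0)} := by
          rw [add_right_comm, add_assoc, pow_succ', mul_assoc]

theorem stmt15 (μ : Measure (ℕ → Bool)) [IsProbabilityMeasure μ] (hμ : IsBernoulliHalf μ)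
    (a b : ℝ) (ha : a ∈ Set.Ioo (0:ℝ) 1) (hb : b ∈ Set.Ioo (0:ℝ) 1)
    (hab : Real.sqrt a ≤ 1 - Real.sqrt (1 - b))
    (u v : ℕ → ℝ) (hu0 : u 0 = a) (hurec : ∀ k, u (k + 1) = 1 - Real.sqrt (1 - u k))
    (hv0 : v 0 = b) (hvrec : ∀ k, v (k + 1) = Real.sqrt (v k)) :
    ∀ (m n : ℕ), ∀ z ∈ Set.Icc (0:ℝ) 1,
      (μ {ω | becZ z n ω ∈ Set.Icc (u m) (v m)}).toReal ≤
        (2:ℝ) ^ m * (μ {ω | becZ z (n + m) ω ∈ Set.Icc a b}).toReal := by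
  intro m n z _
  have h0 : BecWindow (u 0) (v 0) := by
    rw [hu0, hv0]; exact ⟨Ioo_subset_Icc_self ha, Ioo_subset_Icc_self hb, hab⟩
  have h := hμ.measure_becZ_mem_Icc_le_two_pow_mul h0 hurec hvrec z m n
  rw [hu0, hv0] at h
  rw [← ENNReal.toReal_ofNat, ← ENNReal.toReal_pow, ← ENNReal.toReal_mul]
  exact ENNReal.toReal_mono (ENNReal.mul_ne_top (by simp) (measure_ne_top μ _)) h
end

section
/- Let t₀(x) = 2x − x² and t₁(x) = x² on [0,1]. For every integer j ≥ 2 and every y ∈ [ 2^{−j}, (2^{−j})^{2^{−j}} ], there exist b₁, …, b_j ∈ {0,1} such that t_{b₁} ∘ t_{b₂} ∘ ⋯ ∘ t_{b_j}(y) ∈ [1/4, 3/4]. -/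
/-!
The two maps are conjugate under `x ↦ 1 - x`. Squaring drives a point above
`1/4` down into `[1/4, 3/4]` within `k` steps as soon as `x ^ 2 ^ k ≤ 3/4`; for `y ≤ a ^ a` with
`a = 2⁻ʲ` this holds with `k = j` because `(a ^ a) ^ (1/a) = a`. By the symmetry, a point below
`1/4` is handled the same way through `1 - y`, where `(1 - y) ^ 2 ^ j ≤ (1 - 2⁻ʲ) ^ 2 ^ j ≤ e⁻¹`.
Once in `[1/4, 3/4]`, a point can be kept there forever by applying `t₀` below `1/2` and
`t₁` above.
-/

open Set Real

@[simp] theorem becT_true (x : ℝ) : becT true x = x ^ 2 := rfl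

@[simp] theorem becT_false (x : ℝ) : becT false x = 2 * x - x ^ 2 := rfl

def ReachesMiddle (k : ℕ) (x : ℝ) : Prop :=
  ∃ bs : List Bool, bs.length = k ∧ bs.foldr becT x ∈ Icc (1/4 : ℝ) (3/4)

theorem ReachesMiddle.of_becT {k : ℕ} {b : Bool} {x : ℝ} (h : ReachesMiddle k (becT b x)) :
    ReachesMiddle (k + 1) x := by
  obtain ⟨bs, hlen, hmem⟩ := h
  exact ⟨bs ++ [b], by simp [hlen], by simpa using hmem⟩

theorem exists_becT_mem_middle {x : ℝ} (hx : x ∈ Icc (1/4 : ℝ) (3/4)) :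
    ∃ b, becT b x ∈ Icc (1/4 : ℝ) (3/4) := by
  obtain ⟨hx₀, hx₁⟩ := hx
  by_cases h : x ≤ 1/2
  · exact ⟨false, by rw [becT_false]; constructor <;> nlinarith⟩
  · exact ⟨true, by rw [becT_true]; constructor <;> nlinarith⟩

theorem reachesMiddle_of_mem (k : ℕ) {x : ℝ} (hx : x ∈ Icc (1/4 : ℝ) (3/4)) :
    ReachesMiddle k x := by
  induction k generalizing x with
  | zero => exact ⟨[], rfl, hx⟩
  | succ k ih =>
    obtain ⟨b, hb⟩ := exists_becT_mem_middle hx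
    exact (ih hb).of_becT

theorem becT_not_one_sub (b : Bool) (x : ℝ) : becT (!b) (1 - x) = 1 - becT b x := by
  cases b <;> simp only [Bool.not_true, Bool.not_false, becT_true, becT_false] <;> ring

theorem foldr_map_not_becT_one_sub (bs : List Bool) (x : ℝ) :
    (bs.map (!·)).foldr becT (1 - x) = 1 - bs.foldr becT x := by
  induction bs with
  | nil => rfl
  | cons b bs ih => simp only [List.map_cons, List.foldr_cons, ih, becT_not_one_sub]

theorem ReachesMiddle.one_sub {k : ℕ} {x : ℝ} (h : ReachesMiddle k x) :
    ReachesMiddle k (1 - x) := by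
  obtain ⟨bs, hlen, hx₀, hx₁⟩ := h
  refine ⟨bs.map (!·), by simp [hlen], ?_⟩
  rw [foldr_map_not_becT_one_sub]
  constructor <;> linarith

theorem reachesMiddle_of_pow_le (k : ℕ) {x : ℝ} (hx₀ : 1/4 ≤ x) (hx₁ : x ≤ 1)
    (hpow : x ^ 2 ^ k ≤ 3/4) : ReachesMiddle k x := by
  induction k generalizing x with
  | zero => exact reachesMiddle_of_mem 0 ⟨hx₀, by simpa using hpow⟩
  | succ k ih =>
    by_cases h : x ≤ 3/4
    · exact reachesMiddle_of_mem _ ⟨hx₀, h⟩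
    · refine ReachesMiddle.of_becT (b := true) (ih ?_ ?_ ?_) <;> rw [becT_true]
      · nlinarith
      · nlinarith
      · rwa [← pow_mul, ← pow_succ']

theorem one_sub_pow_le_exp_neg_one {n : ℕ} {y : ℝ} (hn : n ≠ 0) (hy₀ : (n : ℝ)⁻¹ ≤ y)
    (hy₁ : y ≤ 1) : (1 - y) ^ n ≤ exp (-1) := by
  have hn₁ : (1 : ℝ) ≤ n := by exact_mod_cast Nat.one_le_iff_ne_zero.mpr hn
  calc (1 - y) ^ n ≤ (1 - 1 / n) ^ n := by
        rw [one_div]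
        gcongr
    _ ≤ exp (-1) := one_sub_div_pow_le_exp_neg hn₁

theorem pow_le_inv_of_le_inv_rpow_inv {n : ℕ} {y : ℝ} (hn : n ≠ 0) (hy₀ : 0 ≤ y)
    (hy : y ≤ ((n : ℝ)⁻¹) ^ ((n : ℝ)⁻¹)) : y ^ n ≤ (n : ℝ)⁻¹ :=
  calc y ^ n ≤ (((n : ℝ)⁻¹) ^ ((n : ℝ)⁻¹)) ^ n := by gcongr
    _ = (n : ℝ)⁻¹ := rpow_inv_natCast_pow (by positivity) hn

theorem reachesMiddle_of_mem_Icc_inv_two_pow {j : ℕ} (hj : 1 ≤ j) {y : ℝ}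
    (hy : y ∈ Icc ((2 ^ j : ℝ)⁻¹) (((2 ^ j : ℝ)⁻¹) ^ ((2 ^ j : ℝ)⁻¹))) :
    ReachesMiddle j y := by
  obtain ⟨hy₀, hy₁⟩ := hy
  have hn : 2 ^ j ≠ 0 := by positivity
  have hpos : (0 : ℝ) < (2 ^ j : ℝ)⁻¹ := by positivity
  have hsmall : (2 ^ j : ℝ)⁻¹ ≤ 1/2 := by
    rw [inv_le_comm₀ (by positivity) (by norm_num)]
    simpa using pow_le_pow_right₀ (by norm_num : (1 : ℝ) ≤ 2) hj
  have hhigh : y ^ 2 ^ j ≤ (2 ^ j : ℝ)⁻¹ := by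
    simpa using pow_le_inv_of_le_inv_rpow_inv (n := 2 ^ j) (y := y) hn (by linarith)
      (by exact_mod_cast hy₁)
  have hy_le_one : y ≤ 1 :=
    (pow_le_one_iff_of_nonneg (by linarith) hn).mp (by linarith)
  rcases lt_or_ge y (1/4) with hlow | hmid
  · have hexp : (1 - y) ^ 2 ^ j ≤ exp (-1) :=
      one_sub_pow_le_exp_neg_one (n := 2 ^ j) hn (by exact_mod_cast hy₀) hy_le_one
    have h := (reachesMiddle_of_pow_le j (x := 1 - y) (by linarith) (by linarith)
      (by linarith [exp_neg_one_lt_half])).one_sub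
    rwa [sub_sub_cancel] at h
  · exact reachesMiddle_of_pow_le j hmid hy_le_one (by linarith)

/-- For `bs = [b₁, …, b_j]`, `bs.foldr becT y = t_{b₁}(t_{b₂}(⋯ t_{b_j}(y) ⋯))`,
i.e. `t_{b_j}` is applied first and `t_{b₁}` last. -/
theorem stmt18 (j : ℕ) (hj : 2 ≤ j) (y : ℝ)
    (hy : y ∈ Set.Icc ((2:ℝ) ^ (-(j:ℝ))) (((2:ℝ) ^ (-(j:ℝ))) ^ ((2:ℝ) ^ (-(j:ℝ))))) :
    ∃ bs : List Bool, bs.length = j ∧ bs.foldr becT y ∈ Set.Icc (1/4 : ℝ) (3/4) := by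
  rw [rpow_neg zero_le_two, rpow_natCast] at hy
  exact reachesMiddle_of_mem_Icc_inv_two_pow (by omega) hy
end
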